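/- Let N \ge 2, let z_1 > ... > z_N be the zeros of H_N, and S_N the matrix with s_{ii} = 1 + \sum_{l\ne i}(z_i-z_l)^{-2}, s_{ij} = -(z_i-z_j)^{-2} for i\ne j. Then the eigenvalues of S_N are exactly 1, 2, ..., N (each with multiplicity one), and for each n = 1,...,N there exists a polynomial q_n of degree n-1 such that (q_n(z_1),...,q_n(z_N))^T is an eigenvector of S_N for eigenvalue n. -/

import Mathlib

open Polynomial Finset Matrix

/-- The physicists' Hermite polynomials, orthogonal w.r.t. the weight `e^{-x^2}`. -/
noncomputable def physHermite : ℕ → Polynomial ℝ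
  | 0 => 1
  | 1 => 2 * X
  | n + 2 => 2 * X * physHermite (n + 1) - C (2 * ((n : ℝ) + 1)) * physHermite n

/-!
For a polynomial `q`, the `i`-th entry of `S (q(z_j))_j` is
`q(z_i) + ∑_{l ≠ i} (q(z_i) - q(z_l)) / (z_i - z_l)^2`. Expanding `q(z_l)` to second order
around `z_i`, `q(z_l) = q(z_i) + (z_l - z_i) q'(z_i) + (z_i - z_l)^2 G_{z_l}(q)(z_i)` with a
polynomial remainder `G_a(q)` (`quadRemainder a q`), and using the Stieltjes relations
`∑_{l ≠ i} 1 / (z_i - z_l) = z_i`, which are the Hermite equation `H'' = 2xH' - 2NH` read off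
at the zeros, the sum becomes `Ψq(z_i)` for the linear operator
`Ψq = x q' + q''/2 - ∑_l G_{z_l}(q)` (`calogeroOp z`). So `S` acts on node values as `1 + Ψ`.
Since `Ψ` maps polynomials of degree `≤ m` to themselves and acts by `m` on the top
coefficient, it has an eigenpolynomial of each degree `m`; for `m < N` its values at the `N`
distinct nodes are not all zero, giving an eigenvector of `S` for the eigenvalue `m + 1`.
The `N` distinct eigenvalues `1, …, N` then determine the characteristic polynomial.
-/

section Nodal

open Lagrange

variable {K : Type*} [Field K] {ι : Type*} {v : ι → K}

lemma eq_C_leadingCoeff_mul_nodal [Fintype ι] {p : K[X]} (hv : Function.Injective v)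
    (hdeg : p.natDegree = Fintype.card ι) (hroot : ∀ i, p.eval (v i) = 0) :
    p = C p.leadingCoeff * nodal univ v := by
  rcases eq_or_ne p 0 with rfl | hp
  · simp
  have hlc : p.leadingCoeff ≠ 0 := leadingCoeff_ne_zero.2 hp
  refine eq_of_degree_le_of_eval_index_eq univ hv.injOn ?_ ?_ ?_ ?_
  · rw [degree_eq_natDegree hp, hdeg, card_univ]
  · rw [degree_C_mul hlc, degree_nodal, degree_eq_natDegree hp, hdeg, card_univ]
  · rw [leadingCoeff_mul, leadingCoeff_C, nodal_monic.leadingCoeff, mul_one]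
  · intro i _
    simp [hroot i, eval_nodal_at_node (mem_univ i)]

lemma eval_derivative_nodal_eq_mul_sum_inv [DecidableEq ι] (s : Finset ι) {x : K}
    (hx : ∀ l ∈ s, x ≠ v l) :
    (derivative (nodal s v)).eval x = (nodal s v).eval x * ∑ l ∈ s, (x - v l)⁻¹ := by
  rw [derivative_nodal, eval_finsetSum, mul_sum]
  refine sum_congr rfl fun l hl => ?_
  rw [nodal_eq_mul_nodal_erase hl, eval_mul, eval_sub, eval_X, eval_C,
    mul_comm (x - v l), mul_assoc, mul_inv_cancel₀ (sub_ne_zero.2 (hx l hl)), mul_one]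

lemma eval_derivative_derivative_nodal [Fintype ι] [DecidableEq ι] (hv : Function.Injective v)
    (i : ι) :
    (derivative (derivative (nodal univ v))).eval (v i)
      = 2 * (derivative (nodal univ v)).eval (v i) * ∑ l ∈ univ.erase i, (v i - v l)⁻¹ := by
  have hx : ∀ l ∈ univ.erase i, v i ≠ v l := fun l hl => hv.ne (ne_of_mem_erase hl).symm
  rw [eval_nodal_derivative_eval_node_eq (mem_univ i), mul_assoc,
    ← eval_derivative_nodal_eq_mul_sum_inv _ hx, nodal_eq_mul_nodal_erase (mem_univ i)]
  simp only [derivative_mul, derivative_sub, derivative_X, derivative_C, sub_zero, one_mul,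
    derivative_add, eval_add, eval_mul, eval_sub, eval_X, eval_C, sub_self, zero_mul, add_zero]
  ring

lemma eval_derivative_derivative_eq_mul_sum_inv [Fintype ι] [DecidableEq ι] {p : K[X]}
    (hv : Function.Injective v) (hdeg : p.natDegree = Fintype.card ι)
    (hroot : ∀ i, p.eval (v i) = 0) (i : ι) :
    (derivative (derivative p)).eval (v i)
      = 2 * (derivative p).eval (v i) * ∑ l ∈ univ.erase i, (v i - v l)⁻¹ := by
  rw [eq_C_leadingCoeff_mul_nodal hv hdeg hroot]
  simp only [derivative_C_mul, eval_C_mul, eval_derivative_derivative_nodal hv]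
  ring

lemma eval_derivative_ne_zero_of_injective_roots [Fintype ι] [DecidableEq ι] {p : K[X]}
    (hv : Function.Injective v) (hdeg : p.natDegree = Fintype.card ι)
    (hroot : ∀ i, p.eval (v i) = 0) (i : ι) : (derivative p).eval (v i) ≠ 0 := by
  have hp : p ≠ 0 := by
    rintro rfl
    exact (Fintype.card_pos_iff.2 ⟨i⟩).ne' (hdeg.symm.trans natDegree_zero)
  rw [eq_C_leadingCoeff_mul_nodal hv hdeg hroot, derivative_C_mul, eval_C_mul,
    eval_nodal_derivative_eval_node_eq (mem_univ i)]
  exact mul_ne_zero (leadingCoeff_ne_zero.2 hp)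
    (eval_nodal_not_at_node fun l hl => hv.ne (ne_of_mem_erase hl).symm)

end Nodal

section DegreeLT

variable {R : Type*} [Semiring R]

lemma mem_degreeLT_succ_iff {q : R[X]} {k : ℕ} : q ∈ degreeLT R (k + 1) ↔ q.natDegree ≤ k := by
  rw [degreeLT_succ_eq_degreeLE, mem_degreeLE, natDegree_le_iff_degree_le]

lemma derivative_mem_degreeLT {q : R[X]} {k : ℕ} (hq : q ∈ degreeLT R (k + 1)) :
    derivative q ∈ degreeLT R k := by
  rw [mem_degreeLT, degree_lt_iff_coeff_zero] at hq ⊢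
  intro j hj
  rw [coeff_derivative, hq (j + 1) (by omega), zero_mul]

lemma mem_degreeLT_of_mul_mem [NoZeroDivisors R] {f g : R[X]} {k : ℕ} (hf : f ≠ 0)
    (h : f * g ∈ degreeLT R (k + f.natDegree)) : g ∈ degreeLT R k := by
  rcases eq_or_ne g 0 with rfl | hg
  · exact zero_mem _
  rw [mem_degreeLT, ← natDegree_lt_iff_degree_lt (mul_ne_zero hf hg), natDegree_mul hf hg] at h
  rw [mem_degreeLT, ← natDegree_lt_iff_degree_lt hg]
  omega

end DegreeLT

lemma X_mul_derivative_sub_smul_mem_degreeLT {R : Type*} [CommRing R] {q : R[X]} {k : ℕ}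
    (hq : q ∈ degreeLT R (k + 1)) : X * derivative q - (k : R) • q ∈ degreeLT R k := by
  rw [mem_degreeLT, degree_lt_iff_coeff_zero] at hq ⊢
  intro j hj
  rcases j with _ | j
  · obtain rfl : k = 0 := by omega
    simp
  rw [coeff_sub, coeff_X_mul, coeff_derivative, coeff_smul, smul_eq_mul]
  rcases eq_or_lt_of_le hj with rfl | hlt
  · push_cast
    ring
  · rw [hq (j + 1) (by omega)]
    ring

lemma X_sub_C_sq_dvd {R : Type*} [CommRing R] {p : R[X]} {a : R} (h₀ : p.IsRoot a)
    (h₁ : (derivative p).IsRoot a) : (X - C a) ^ 2 ∣ p := by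
  rcases eq_or_ne p 0 with rfl | hp
  · exact dvd_zero _
  exact (le_rootMultiplicity_iff hp).1 ((one_lt_rootMultiplicity_iff_isRoot hp).2 ⟨h₀, h₁⟩)

section QuadRemainder

variable {R : Type*} [CommRing R]

noncomputable def quadRemainder (a : R) (q : R[X]) : R[X] :=
  (C (q.eval a) - q + (X - C a) * derivative q) /ₘ (X - C a) ^ 2

lemma X_sub_C_sq_mul_quadRemainder (a : R) (q : R[X]) :
    (X - C a) ^ 2 * quadRemainder a q = C (q.eval a) - q + (X - C a) * derivative q := by
  obtain ⟨g, hg⟩ : (X - C a) ^ 2 ∣ C (q.eval a) - q + (X - C a) * derivative q :=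
    X_sub_C_sq_dvd (by simp) (by simp [derivative_mul])
  rw [quadRemainder, hg, mul_divByMonic_cancel_left g ((monic_X_sub_C a).pow 2)]

lemma quadRemainder_add [IsDomain R] (a : R) (q r : R[X]) :
    quadRemainder a (q + r) = quadRemainder a q + quadRemainder a r := by
  refine mul_left_cancel₀ (pow_ne_zero 2 (X_sub_C_ne_zero a)) ?_
  simp only [mul_add, X_sub_C_sq_mul_quadRemainder, eval_add, C_add, derivative_add]
  ring

lemma quadRemainder_smul [IsDomain R] (a c : R) (q : R[X]) :
    quadRemainder a (c • q) = c • quadRemainder a q := by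
  refine mul_left_cancel₀ (pow_ne_zero 2 (X_sub_C_ne_zero a)) ?_
  rw [smul_eq_C_mul, smul_eq_C_mul, mul_left_comm, X_sub_C_sq_mul_quadRemainder,
    X_sub_C_sq_mul_quadRemainder]
  simp only [eval_mul, eval_C, C_mul, derivative_C_mul]
  ring

lemma two_mul_eval_quadRemainder_self (a : R) (q : R[X]) :
    2 * (quadRemainder a q).eval a = (derivative (derivative q)).eval a := by
  have h := congrArg (fun p => (derivative (derivative p)).eval a)
    (X_sub_C_sq_mul_quadRemainder a q)
  simpa [derivative_mul, derivative_pow, mul_comm] using h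

lemma quadRemainder_mem_degreeLT [IsDomain R] {a : R} {q : R[X]} {k : ℕ}
    (hq : q ∈ degreeLT R (k + 1)) : quadRemainder a q ∈ degreeLT R k := by
  rw [mem_degreeLT_succ_iff] at hq
  have hnum : (C (q.eval a) - q + (X - C a) * derivative q).natDegree ≤ k + 1 := by
    have h₁ := natDegree_X_sub_C_le a
    have h₂ := natDegree_derivative_le q
    refine (natDegree_add_le _ _).trans (max_le ?_ (natDegree_mul_le.trans (by omega)))
    exact (natDegree_sub_le _ _).trans (max_le (by simp) (by omega))
  refine mem_degreeLT_of_mul_mem (pow_ne_zero 2 (X_sub_C_ne_zero a)) ?_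
  rw [X_sub_C_sq_mul_quadRemainder, natDegree_pow, natDegree_X_sub_C]
  exact mem_degreeLT_succ_iff.2 hnum

end QuadRemainder

section Eigenpolynomial

variable {K : Type*} [Field K] [CharZero K]

lemma exists_eigenpolynomial_of_sub_smul_mem_degreeLT (L : K[X] →ₗ[K] K[X])
    (hL : ∀ k : ℕ, ∀ q ∈ degreeLT K (k + 1), L q - (k : K) • q ∈ degreeLT K k) (m : ℕ) :
    ∃ q : K[X], q ≠ 0 ∧ q.natDegree = m ∧ L q = (m : K) • q := by
  let T : degreeLT K (m + 1) →ₗ[K] degreeLT K m :=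
    ((L - (m : K) • LinearMap.id).domRestrict _).codRestrict _ fun q => hL m q q.2
  have hker : LinearMap.ker T ≠ ⊥ := LinearMap.ker_ne_bot_of_finrank_lt <| by
    simp [(degreeLTEquiv K _).finrank_eq]
  obtain ⟨⟨q, hq⟩, hqT, hq0⟩ := Submodule.exists_mem_ne_zero_of_ne_bot hker
  have hq0 : q ≠ 0 := fun h => hq0 (Subtype.ext h)
  have hLq : L q = (m : K) • q := by
    have h : (L - (m : K) • LinearMap.id : K[X] →ₗ[K] K[X]) q = 0 :=
      congrArg Subtype.val (LinearMap.mem_ker.1 hqT)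
    rwa [LinearMap.sub_apply, LinearMap.smul_apply, LinearMap.id_apply, sub_eq_zero] at h
  refine ⟨q, hq0, le_antisymm (mem_degreeLT_succ_iff.1 hq) ?_, hLq⟩
  by_contra! hlt
  have hmem := hL q.natDegree q (mem_degreeLT_succ_iff.2 le_rfl)
  rw [hLq, ← sub_smul] at hmem
  have hne : (m : K) - q.natDegree ≠ 0 := sub_ne_zero.2 (by exact_mod_cast hlt.ne')
  have := (Submodule.smul_mem_iff _ hne).1 hmem
  rw [mem_degreeLT, degree_eq_natDegree hq0] at this
  exact lt_irrefl _ (by exact_mod_cast this)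

end Eigenpolynomial

section CalogeroOperator

variable {K : Type*} [Field K] {ι : Type*} [Fintype ι]

noncomputable def calogeroOp (z : ι → K) : K[X] →ₗ[K] K[X] where
  toFun q := X * derivative q + (2⁻¹ : K) • derivative (derivative q) - ∑ l, quadRemainder (z l) q
  map_add' q r := by
    simp only [map_add, quadRemainder_add, sum_add_distrib, smul_add]
    ring
  map_smul' c q := by
    simp only [map_smul, quadRemainder_smul, ← smul_sum, RingHom.id_apply, smul_sub, smul_add,
      mul_smul_comm, smul_comm c (2⁻¹ : K)]

lemma calogeroOp_sub_smul_mem_degreeLT (z : ι → K) (k : ℕ) (q : K[X])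
    (hq : q ∈ degreeLT K (k + 1)) : calogeroOp z q - (k : K) • q ∈ degreeLT K k := by
  have hq'' : derivative (derivative q) ∈ degreeLT K k :=
    derivative_mem_degreeLT (degreeLT_mono k.le_succ (derivative_mem_degreeLT hq))
  have hsplit : calogeroOp z q - (k : K) • q = (X * derivative q - (k : K) • q)
      + (2⁻¹ : K) • derivative (derivative q) - ∑ l, quadRemainder (z l) q := by
    simp only [calogeroOp, LinearMap.coe_mk, AddHom.coe_mk]
    abel
  rw [hsplit]
  exact sub_mem (add_mem (X_mul_derivative_sub_smul_mem_degreeLT hq) (Submodule.smul_mem _ _ hq''))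
    (sum_mem fun l _ => quadRemainder_mem_degreeLT hq)

lemma eval_calogeroOp [CharZero K] [DecidableEq ι] {z : ι → K} (hz : Function.Injective z)
    (hstieltjes : ∀ i, ∑ l ∈ univ.erase i, (z i - z l)⁻¹ = z i) (q : K[X]) (i : ι) :
    (calogeroOp z q).eval (z i)
      = ∑ l ∈ univ.erase i, ((z i - z l) ^ 2)⁻¹ * (q.eval (z i) - q.eval (z l)) := by
  have hterm : ∀ l ∈ univ.erase i, ((z i - z l) ^ 2)⁻¹ * (q.eval (z i) - q.eval (z l))
      = (derivative q).eval (z i) * (z i - z l)⁻¹ - (quadRemainder (z l) q).eval (z i) := by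
    intro l hl
    have hne : z i - z l ≠ 0 := sub_ne_zero.2 (hz.ne (ne_of_mem_erase hl).symm)
    have h := congrArg (eval (z i)) (X_sub_C_sq_mul_quadRemainder (z l) q)
    simp only [eval_mul, eval_pow, eval_sub, eval_add, eval_X, eval_C] at h
    field_simp
    linear_combination h
  rw [sum_congr rfl hterm, sum_sub_distrib, ← mul_sum, hstieltjes i, sum_erase_eq_sub (mem_univ i)]
  have h2 := two_mul_eval_quadRemainder_self (z i) q
  simp only [calogeroOp, LinearMap.coe_mk, AddHom.coe_mk, eval_sub, eval_add, eval_mul, eval_X,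
    eval_smul, smul_eq_mul, eval_finsetSum]
  linear_combination -2⁻¹ * h2

end CalogeroOperator

section CalogeroMatrix

variable {K : Type*} [Field K] {ι : Type*} [Fintype ι] [DecidableEq ι]

def calogeroMatrix (z : ι → K) : Matrix ι ι K :=
  Matrix.of fun i j => if i = j then 1 + ∑ l ∈ univ.erase i, ((z i - z l) ^ 2)⁻¹
    else -((z i - z j) ^ 2)⁻¹

lemma calogeroMatrix_mulVec_apply (z : ι → K) (x : ι → K) (i : ι) :
    (calogeroMatrix z *ᵥ x) i = x i + ∑ l ∈ univ.erase i, ((z i - z l) ^ 2)⁻¹ * (x i - x l) := by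
  have hoff : ∀ l ∈ univ.erase i, calogeroMatrix z i l * x l = -(((z i - z l) ^ 2)⁻¹ * x l) :=
    fun l hl => by rw [calogeroMatrix, of_apply, if_neg (ne_of_mem_erase hl).symm, neg_mul]
  rw [mulVec, dotProduct, ← add_sum_erase _ _ (mem_univ i), sum_congr rfl hoff, calogeroMatrix,
    of_apply, if_pos rfl]
  simp only [mul_sub, sum_sub_distrib, add_mul, sum_neg_distrib, one_mul, sum_mul]
  ring

lemma calogeroMatrix_mulVec_eval [CharZero K] {z : ι → K} (hz : Function.Injective z)
    (hstieltjes : ∀ i, ∑ l ∈ univ.erase i, (z i - z l)⁻¹ = z i) (q : K[X]) :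
    calogeroMatrix z *ᵥ (fun i => q.eval (z i))
      = fun i => q.eval (z i) + (calogeroOp z q).eval (z i) := by
  ext i
  rw [calogeroMatrix_mulVec_apply, eval_calogeroOp hz hstieltjes]

lemma exists_calogeroMatrix_eigenpolynomial [CharZero K] {z : ι → K} (hz : Function.Injective z)
    (hstieltjes : ∀ i, ∑ l ∈ univ.erase i, (z i - z l)⁻¹ = z i) {n : ℕ} (hn : 1 ≤ n)
    (hnN : n ≤ Fintype.card ι) :
    ∃ q : K[X], q.natDegree = n - 1 ∧ (fun i => q.eval (z i)) ≠ 0 ∧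
      calogeroMatrix z *ᵥ (fun i => q.eval (z i)) = (n : K) • fun i => q.eval (z i) := by
  obtain ⟨q, hq0, hdeg, hq⟩ := exists_eigenpolynomial_of_sub_smul_mem_degreeLT (calogeroOp z)
    (calogeroOp_sub_smul_mem_degreeLT z) (n - 1)
  refine ⟨q, hdeg, fun h => hq0 ?_, ?_⟩
  · exact eq_zero_of_natDegree_lt_card_of_eval_eq_zero q hz (congrFun h) (by omega)
  · ext i
    simp only [calogeroMatrix_mulVec_eval hz hstieltjes, hq, Pi.smul_apply, eval_smul, smul_eq_mul,
      Nat.cast_sub hn, Nat.cast_one]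
    ring

end CalogeroMatrix

lemma charpoly_eq_prod_of_injective_eigenvalues {K : Type*} [Field K] {ι : Type*} [Fintype ι]
    [DecidableEq ι] {M : Matrix ι ι K} {μ : ι → K}
    (hμ : Function.Injective μ) (hM : ∀ i, ∃ x ≠ 0, M *ᵥ x = μ i • x) :
    M.charpoly = ∏ i, (X - C (μ i)) := by
  have hroot : ∀ i, M.charpoly.eval (μ i) = 0 := fun i => by
    obtain ⟨x, hx0, hx⟩ := hM i
    rw [eval_charpoly, ← exists_mulVec_eq_zero_iff]
    exact ⟨x, hx0, by simp [sub_mulVec, hx]⟩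
  have h := eq_C_leadingCoeff_mul_nodal hμ M.charpoly_natDegree_eq_dim hroot
  rwa [M.charpoly_monic.leadingCoeff, C_1, one_mul, Lagrange.nodal] at h

section Hermite

lemma physHermite_add_two (n : ℕ) : physHermite (n + 2) =
    2 * X * physHermite (n + 1) - 2 * ((n : ℝ[X]) + 1) * physHermite n := by
  rw [physHermite]
  simp [map_mul, map_add, C_ofNat]

lemma coeff_physHermite_self_and_natDegree_le (n : ℕ) :
    (physHermite n).coeff n = 2 ^ n ∧ (physHermite n).natDegree ≤ n := by
  induction n using Nat.twoStepInduction with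
  | zero => simp [physHermite]
  | one =>
    rw [physHermite, ← C_ofNat]
    exact ⟨by simp, (natDegree_C_mul_le _ _).trans natDegree_X_le⟩
  | more n ih₀ ih₁ =>
    have h2X : (2 * X : ℝ[X]).natDegree ≤ 1 := by
      rw [← C_ofNat]
      exact (natDegree_C_mul_le _ _).trans natDegree_X_le
    rw [physHermite]
    constructor
    · rw [coeff_sub, ← C_ofNat, mul_assoc, coeff_C_mul, coeff_X_mul, ih₁.1, coeff_C_mul,
        coeff_eq_zero_of_natDegree_lt (by omega)]
      ring
    · refine (natDegree_sub_le _ _).trans (max_le ?_ ((natDegree_C_mul_le _ _).trans (by omega)))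
      exact natDegree_mul_le.trans (by omega)

lemma natDegree_physHermite (n : ℕ) : (physHermite n).natDegree = n :=
  natDegree_eq_of_le_of_coeff_ne_zero (coeff_physHermite_self_and_natDegree_le n).2
    (by rw [(coeff_physHermite_self_and_natDegree_le n).1]; positivity)

lemma derivative_physHermite_succ (n : ℕ) :
    derivative (physHermite (n + 1)) = 2 * ((n : ℝ[X]) + 1) * physHermite n := by
  induction n using Nat.twoStepInduction with
  | zero => simp [physHermite]
  | one =>
    simp only [physHermite, CharP.cast_eq_zero, zero_add, mul_one, derivative_sub, derivative_mul,
      derivative_ofNat, zero_mul, derivative_X, derivative_C, sub_zero, Nat.cast_one]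
    ring
  | more n ih₀ ih₁ =>
    rw [physHermite_add_two, derivative_sub, derivative_mul, derivative_mul, ih₁]
    simp only [derivative_mul, derivative_ofNat, derivative_X, derivative_natCast,
      derivative_add, derivative_one, ih₀]
    push_cast
    linear_combination (-2 * ((n : ℝ[X]) + 2)) * physHermite_add_two n

lemma physHermite_ode (n : ℕ) :
    derivative (derivative (physHermite n))
      = 2 * X * derivative (physHermite n) - 2 * (n : ℝ[X]) * physHermite n := by
  rcases n with _ | _ | n
  · simp [physHermite]
  · simp only [physHermite, derivative_mul, derivative_ofNat, zero_mul, derivative_X, mul_one,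
      zero_add, Nat.cast_one]
    ring
  · rw [derivative_physHermite_succ, derivative_mul, derivative_physHermite_succ]
    simp only [derivative_mul, derivative_ofNat, derivative_natCast, derivative_add,
      derivative_one]
    push_cast
    linear_combination (2 * ((n : ℝ[X]) + 2)) * physHermite_add_two n

lemma sum_inv_sub_eq_of_isRoot_physHermite {N : ℕ} {z : Fin N → ℝ} (hz : Function.Injective z)
    (hroot : ∀ i, (physHermite N).eval (z i) = 0) (i : Fin N) :
    ∑ l ∈ univ.erase i, (z i - z l)⁻¹ = z i := by
  have hdeg : (physHermite N).natDegree = Fintype.card (Fin N) := by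
    rw [natDegree_physHermite, Fintype.card_fin]
  have hode := congrArg (eval (z i)) (physHermite_ode N)
  rw [eval_derivative_derivative_eq_mul_sum_inv hz hdeg hroot] at hode
  simp only [eval_sub, eval_mul, eval_ofNat, eval_X, eval_natCast, hroot i, mul_zero,
    sub_zero] at hode
  have hne := eval_derivative_ne_zero_of_injective_roots hz hdeg hroot i
  exact mul_left_cancel₀ (mul_ne_zero two_ne_zero hne) (by linear_combination hode)

end Hermite

theorem stmt_8_general (N : ℕ) (z : Fin N → ℝ)
    (hord : ∀ i j : Fin N, i < j → z j < z i)
    (hroot : ∀ i, (physHermite N).eval (z i) = 0)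
    (S : Matrix (Fin N) (Fin N) ℝ)
    (hS : ∀ i j, S i j = if i = j
      then 1 + ∑ l ∈ Finset.univ.erase i, ((z i - z l) ^ 2)⁻¹
      else -((z i - z j) ^ 2)⁻¹) :
    S.charpoly = ∏ n ∈ Finset.range N, (X - C ((n : ℝ) + 1)) ∧
      ∀ n : ℕ, 1 ≤ n → n ≤ N →
        ∃ q : Polynomial ℝ, q.natDegree = n - 1 ∧
          (fun i => q.eval (z i)) ≠ (0 : Fin N → ℝ) ∧
          S.mulVec (fun i => q.eval (z i)) = (n : ℝ) • (fun i => q.eval (z i)) := by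
  have hz : Function.Injective z := StrictAnti.injective hord
  have hstieltjes := sum_inv_sub_eq_of_isRoot_physHermite hz hroot
  obtain rfl : S = calogeroMatrix z := Matrix.ext fun i j => hS i j
  refine ⟨?_, fun n hn hnN =>
    exists_calogeroMatrix_eigenpolynomial hz hstieltjes hn (by rwa [Fintype.card_fin])⟩
  rw [← Fin.prod_univ_eq_prod_range (fun n => X - C ((n : ℝ) + 1))]
  refine charpoly_eq_prod_of_injective_eigenvalues (fun a b h => Fin.ext (by simpa using h))
    fun k => ?_
  obtain ⟨q, -, hq0, hq⟩ :=
    exists_calogeroMatrix_eigenpolynomial hz hstieltjes (n := k + 1) (by omega) (by simp)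
  exact ⟨_, hq0, by rw [hq]; push_cast; rfl⟩

theorem stmt_8 (N : ℕ) (hN : 2 ≤ N) (z : Fin N → ℝ)
    (hord : ∀ i j : Fin N, i < j → z j < z i)
    (hroot : ∀ i, (physHermite N).eval (z i) = 0)
    (S : Matrix (Fin N) (Fin N) ℝ)
    (hS : ∀ i j, S i j = if i = j
      then 1 + ∑ l ∈ Finset.univ.erase i, ((z i - z l) ^ 2)⁻¹
      else -((z i - z j) ^ 2)⁻¹) :
    S.charpoly = ∏ n ∈ Finset.range N, (X - C ((n : ℝ) + 1)) ∧
      ∀ n : ℕ, 1 ≤ n → n ≤ N →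
        ∃ q : Polynomial ℝ, q.natDegree = n - 1 ∧
          (fun i => q.eval (z i)) ≠ (0 : Fin N → ℝ) ∧
          S.mulVec (fun i => q.eval (z i)) = (n : ℝ) • (fun i => q.eval (z i)) :=
  stmt_8_general N z hord hroot S hS
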